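/- arXiv:1906.09649 — 2 statements merged into one kernel-verified Lean document; each statement's English description precedes it below -/
import Mathlib

section
/- The composite functor $FG : \mathbf{D} \to \mathbf{D}$ has an initial algebra if and only if $GF : \mathbf{C} \to \mathbf{C}$ has an initial algebra. -/
open CategoryTheory CategoryTheory.Limits

universe v v₂ u u₂

/-!
Rolling rule: an `F ⋙ G`-algebra `A` yields the `G ⋙ F`-algebra `(F A, F A.str)`, and
symmetrically. If `A` is initial, `A.str` is invertible (Lambek), so every algebra map
`m : F A ⟶ Y` factors as `F k ≫ Y.str` through the algebra map
`k := A.str⁻¹ ≫ G m : A ⟶ (G Y, G Y.str)`; initiality of `A` makes `k`, hence `m`, unique.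
-/

namespace CategoryTheory.Endofunctor.Algebra

variable {C : Type u} [Category.{v} C] {D : Type u₂} [Category.{v₂} D]
variable (F : C ⥤ D) (G : D ⥤ C)

@[simps]
def roll : Algebra (F ⋙ G) ⥤ Algebra (G ⋙ F) where
  obj A := ⟨F.obj A.a, F.map A.str⟩
  map f := ⟨F.map f.f, by
    dsimp
    rw [← F.map_comp, ← F.map_comp]
    exact congrArg F.map f.h⟩

variable {F G}

theorem map_inv_comp_map_comp_eq {X : C} {Y : D} (a : G.obj (F.obj X) ⟶ X) [IsIso a]
    (y : F.obj (G.obj Y) ⟶ Y) (g : F.obj X ⟶ Y) (h : F.map (G.map g) ≫ y = F.map a ≫ g) :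
    F.map (inv a ≫ G.map g) ≫ y = g := by
  rw [F.map_comp, Category.assoc, h, ← F.map_comp_assoc, IsIso.inv_hom_id, F.map_id,
    Category.id_comp]

@[simps]
def strHomRoll (Y : Algebra (G ⋙ F)) : (roll F G).obj ((roll G F).obj Y) ⟶ Y :=
  ⟨Y.str, rfl⟩

@[simps]
noncomputable def unroll {A : Algebra (F ⋙ G)} [IsIso A.str] {Y : Algebra (G ⋙ F)}
    (m : (roll F G).obj A ⟶ Y) : A ⟶ (roll G F).obj Y where
  f := inv A.str ≫ G.map m.f
  h := (G.map_comp _ _).symm.trans <|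
    (congrArg G.map (map_inv_comp_map_comp_eq _ _ _ m.h)).trans (IsIso.hom_inv_id_assoc _ _).symm

theorem roll_map_unroll_comp_strHomRoll {A : Algebra (F ⋙ G)} [IsIso A.str]
    {Y : Algebra (G ⋙ F)} (m : (roll F G).obj A ⟶ Y) :
    (roll F G).map (unroll m) ≫ strHomRoll Y = m :=
  Hom.ext (map_inv_comp_map_comp_eq _ _ _ m.h)

variable (F G)

noncomputable def isInitialRoll {A : Algebra (F ⋙ G)} (hA : IsInitial A) :
    IsInitial ((roll F G).obj A) :=
  have := Initial.str_isIso hA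
  IsInitial.ofUniqueHom (fun Y => (roll F G).map (hA.to ((roll G F).obj Y)) ≫ strHomRoll Y)
    fun Y m => by rw [← roll_map_unroll_comp_strHomRoll m, hA.hom_ext (unroll m)]

end CategoryTheory.Endofunctor.Algebra

/-- `FG` has an initial algebra iff `GF` does.  In Mathlib notation `FG = G ⋙ F`
(an endofunctor on `D`) and `GF = F ⋙ G` (an endofunctor on `C`). -/
theorem initial_algebra_iff {C : Type u} [Category.{v} C] {D : Type u₂} [Category.{v₂} D]
    (F : C ⥤ D) (G : D ⥤ C) :
    (∃ B : Endofunctor.Algebra (G ⋙ F), Nonempty (IsInitial B)) ↔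
      (∃ A : Endofunctor.Algebra (F ⋙ G), Nonempty (IsInitial A)) :=
  ⟨fun ⟨_, ⟨hB⟩⟩ => ⟨_, ⟨Endofunctor.Algebra.isInitialRoll G F hB⟩⟩,
    fun ⟨_, ⟨hA⟩⟩ => ⟨_, ⟨Endofunctor.Algebra.isInitialRoll F G hA⟩⟩⟩
end

section
/- The composite functor $FG : \mathbf{D} \to \mathbf{D}$ has a final coalgebra if and only if $GF : \mathbf{C} \to \mathbf{C}$ has a final coalgebra. -/
/-!
`G` sends a `G ⋙ F`-coalgebra `(B, β)` to the `F ⋙ G`-coalgebra `(G B, G β)`, and `F`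
acts the same way in the other direction. Rolling twice returns `(F G B, F G β)`, which receives
the coalgebra morphism `β`. If `(B, β)` is terminal, `β` is invertible by Lambek's lemma, and this
inverse lets one transport uniqueness of morphisms into `B` to uniqueness of morphisms into
`(G B, G β)`.
-/

open CategoryTheory CategoryTheory.Limits

universe v v₂ u u₂

namespace CategoryTheory.Limits

variable {A : Type u} [Category.{v} A] {B : Type u₂} [Category.{v₂} B]

def isTerminalObjOfUnitRetraction (Φ : A ⥤ B) (Ψ : B ⥤ A) (ε : 𝟭 B ⟶ Ψ ⋙ Φ) {t : A}
    (ht : IsTerminal t) (r : Ψ.obj (Φ.obj t) ⟶ t) (hr : ε.app (Φ.obj t) ≫ Φ.map r = 𝟙 _) :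
    IsTerminal (Φ.obj t) :=
  IsTerminal.ofUniqueHom (fun X => ε.app X ≫ Φ.map (ht.from (Ψ.obj X))) fun X g => by
    calc g = g ≫ ε.app (Φ.obj t) ≫ Φ.map r := by rw [hr]; exact (Category.comp_id g).symm
      _ = ε.app X ≫ Φ.map (Ψ.map g ≫ r) := by
        rw [Φ.map_comp, ← Category.assoc, ← Category.assoc]
        exact congrArg (· ≫ Φ.map r) (ε.naturality g)
      _ = ε.app X ≫ Φ.map (ht.from (Ψ.obj X)) := by rw [ht.hom_ext (Ψ.map g ≫ r)]

end CategoryTheory.Limits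

namespace CategoryTheory.Endofunctor.Coalgebra

variable {C : Type u} [Category.{v} C] {D : Type u₂} [Category.{v₂} D] (F : C ⥤ D) (G : D ⥤ C)

@[simps]
def roll : Coalgebra (G ⋙ F) ⥤ Coalgebra (F ⋙ G) where
  obj B := ⟨G.obj B.V, G.map B.str⟩
  map f := ⟨G.map f.f, by
    dsimp only [Functor.comp_map]; rw [← G.map_comp, ← G.map_comp]; exact congrArg G.map f.h⟩

@[simps]
def rollUnit : 𝟭 (Coalgebra (F ⋙ G)) ⟶ roll G F ⋙ roll F G where
  app X := ⟨X.str, rfl⟩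
  naturality _ _ g := by ext; exact g.h.symm

variable {F G}

def isTerminalRoll {B : Coalgebra (G ⋙ F)} (hB : IsTerminal B) : IsTerminal ((roll F G).obj B) :=
  isTerminalObjOfUnitRetraction (roll F G) (roll G F) (rollUnit F G) hB
    ⟨Terminal.strInv hB, by
      show (G ⋙ F).map B.str ≫ (G ⋙ F).map (Terminal.strInv hB) = _
      rw [← Functor.map_comp, Terminal.right_inv, Functor.map_id]
      exact (Terminal.left_inv hB).symm⟩
    (by
      ext
      show G.map B.str ≫ G.map (Terminal.strInv hB) = 𝟙 _
      rw [← G.map_comp, Terminal.right_inv, G.map_id])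

end CategoryTheory.Endofunctor.Coalgebra

open CategoryTheory.Endofunctor.Coalgebra in
/-- In Mathlib notation `FG = G ⋙ F` (an endofunctor on `D`) and `GF = F ⋙ G` (on `C`). -/
theorem final_coalgebra_iff {C : Type u} [Category.{v} C] {D : Type u₂} [Category.{v₂} D]
    (F : C ⥤ D) (G : D ⥤ C) :
    (∃ B : Endofunctor.Coalgebra (G ⋙ F), Nonempty (IsTerminal B)) ↔
      (∃ A : Endofunctor.Coalgebra (F ⋙ G), Nonempty (IsTerminal A)) :=
  ⟨fun ⟨B, ⟨hB⟩⟩ => ⟨(roll F G).obj B, ⟨isTerminalRoll hB⟩⟩,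
    fun ⟨A, ⟨hA⟩⟩ => ⟨(roll G F).obj A, ⟨isTerminalRoll hA⟩⟩⟩
end
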